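/- Let u, v, θ : ℝ → ℝ be smooth functions satisfying u'(s) = cos u(s) · cos θ(s), v'(s) = sin θ(s), and cos u(s) ≠ 0 for all s, and let Ψ(s,t) = (cos u(s) cos v(s), cos u(s) sin v(s), sin u(s), t) with unit normal N(s,t) = (cos θ(s) sin v(s) − sin θ(s) sin u(s) cos v(s), −cos θ(s) cos v(s) − sin θ(s) sin u(s) sin v(s), sin θ(s) cos u(s), 0) and mean curvature H defined via the fundamental forms. Define R : ℝ⁴ → ℝ⁴ by R(x,y,z,t) = (−y, x, 0, 0). Then ⟨N(s,t), R(Ψ(s,t))⟩ = −cos u(s) · cos θ(s) for all (s,t), and the soliton equation H(s,t) = ⟨N(s,t), R(Ψ(s,t))⟩ holds for all (s,t) if and only if θ'(s) = sin θ(s) sin u(s) + cos²u(s) · cos θ(s) for all s. -/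

import Mathlib

open Real

/-- The standard Euclidean inner product on `ℝ⁴` (indexed by `Fin 4`). -/
noncomputable def ip4 (a b : Fin 4 → ℝ) : ℝ :=
  a 0 * b 0 + a 1 * b 1 + a 2 * b 2 + a 3 * b 3

/-- The mean curvature `H = (g₂₂b₁₁ − 2g₁₂b₁₂ + g₁₁b₂₂)/(g₁₁g₂₂ − g₁₂²)` of a parametrized
surface `Ψ : ℝ² → ℝ⁴` with unit normal `N`, in terms of the first and second fundamental
forms. -/
noncomputable def meanCurv (Ψ N : ℝ → ℝ → Fin 4 → ℝ) (s t : ℝ) : ℝ :=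
  let Ψs := deriv (fun s' => Ψ s' t) s
  let Ψt := deriv (fun t' => Ψ s t') t
  let Ns := deriv (fun s' => N s' t) s
  let Nt := deriv (fun t' => N s t') t
  let g11 := ip4 Ψs Ψs
  let g12 := ip4 Ψs Ψt
  let g22 := ip4 Ψt Ψt
  let b11 := -ip4 Ns Ψs
  let b12 := -ip4 Ns Ψt
  let b22 := -ip4 Nt Ψt
  (g22 * b11 - 2 * g12 * b12 + g11 * b22) / (g11 * g22 - g12 ^ 2)

lemma hasDerivAt_vec4 {f0 f1 f2 f3 : ℝ → ℝ} {d0 d1 d2 d3 : ℝ} {x : ℝ}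
    (h0 : HasDerivAt f0 d0 x) (h1 : HasDerivAt f1 d1 x)
    (h2 : HasDerivAt f2 d2 x) (h3 : HasDerivAt f3 d3 x) :
    HasDerivAt (fun s => (![f0 s, f1 s, f2 s, f3 s] : Fin 4 → ℝ))
      (![d0, d1, d2, d3]) x := by
  rw [hasDerivAt_pi]
  intro i
  fin_cases i <;> simpa

lemma meanCurv_eval (Ψ N : ℝ → ℝ → Fin 4 → ℝ) (s t b g : ℝ)
    (hg11 : ip4 (deriv (fun s' => Ψ s' t) s) (deriv (fun s' => Ψ s' t) s) = g)
    (hg12 : ip4 (deriv (fun s' => Ψ s' t) s) (deriv (fun t' => Ψ s t') t) = 0)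
    (hg22 : ip4 (deriv (fun t' => Ψ s t') t) (deriv (fun t' => Ψ s t') t) = 1)
    (hb11 : ip4 (deriv (fun s' => N s' t) s) (deriv (fun s' => Ψ s' t) s) = b)
    (hb12 : ip4 (deriv (fun s' => N s' t) s) (deriv (fun t' => Ψ s t') t) = 0)
    (hb22 : ip4 (deriv (fun t' => N s t') t) (deriv (fun t' => Ψ s t') t) = 0) :
    meanCurv Ψ N s t = -b / g := by
  simp only [meanCurv, hg11, hg12, hg22, hb11, hb12, hb22]
  ring

/-- For a vertical surface `Ψ(s,t) = (cos u cos v, cos u sin v, sin u, t)` in `𝕊²×ℝ ⊂ ℝ⁴`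
with unit normal `N`, and the rotational Killing field `R(x,y,z,t) = (−y, x, 0, 0)`, one has
`⟨N, R∘Ψ⟩ = −cos u · cos θ`, and the surface is an `R`-soliton (`H = ⟨N, R∘Ψ⟩`) if and only
if `θ' = sin θ sin u + cos²u · cos θ`. -/
theorem vertical_R_soliton_iff (u v θ : ℝ → ℝ)
    (hu : ContDiff ℝ (⊤ : ℕ∞) u) (hv : ContDiff ℝ (⊤ : ℕ∞) v) (hθ : ContDiff ℝ (⊤ : ℕ∞) θ)
    (hu' : ∀ s, deriv u s = cos (u s) * cos (θ s))
    (hv' : ∀ s, deriv v s = sin (θ s))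
    (hreg : ∀ s, cos (u s) ≠ 0)
    (Ψ N : ℝ → ℝ → Fin 4 → ℝ)
    (hΨ : ∀ s t, Ψ s t =
      ![cos (u s) * cos (v s), cos (u s) * sin (v s), sin (u s), t])
    (hN : ∀ s t, N s t =
      ![cos (θ s) * sin (v s) - sin (θ s) * sin (u s) * cos (v s),
        -(cos (θ s) * cos (v s)) - sin (θ s) * sin (u s) * sin (v s),
        sin (θ s) * cos (u s), 0])
    (R : (Fin 4 → ℝ) → Fin 4 → ℝ)
    (hR : ∀ p, R p = ![-(p 1), p 0, 0, 0]) :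
    (∀ s t : ℝ, ip4 (N s t) (R (Ψ s t)) = -(cos (u s) * cos (θ s))) ∧
    ((∀ s t : ℝ, meanCurv Ψ N s t = ip4 (N s t) (R (Ψ s t))) ↔
      (∀ s : ℝ, deriv θ s = sin (θ s) * sin (u s) + cos (u s) ^ 2 * cos (θ s))) := by
  have part1 : ∀ s t : ℝ, ip4 (N s t) (R (Ψ s t)) = -(cos (u s) * cos (θ s)) := by
    intro s t
    rw [hΨ, hR, hN]
    simp only [ip4, Matrix.cons_val_zero, Matrix.cons_val_one, Matrix.head_cons,
      Matrix.cons_val_two, Matrix.tail_cons, Matrix.cons_val_three]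
    linear_combination (-(cos (u s) * cos (θ s))) * sin_sq_add_cos_sq (v s)
  have key : ∀ s t : ℝ, meanCurv Ψ N s t =
      -(cos (u s) * (deriv θ s - sin (θ s) * sin (u s))) / cos (u s) ^ 2 := by
    intro s t
    have hU : HasDerivAt u (cos (u s) * cos (θ s)) s := by
      have h := (hu.differentiable (by simp) s).hasDerivAt
      rwa [hu'] at h
    have hV : HasDerivAt v (sin (θ s)) s := by
      have h := (hv.differentiable (by simp) s).hasDerivAt
      rwa [hv'] at h
    have hΘ : HasDerivAt θ (deriv θ s) s := (hθ.differentiable (by simp) s).hasDerivAt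
    have hfΨs : (fun s' => Ψ s' t) =
        (fun s' => ![cos (u s') * cos (v s'), cos (u s') * sin (v s'), sin (u s'), t]) :=
      funext fun s' => hΨ s' t
    have hfΨt : (fun t' => Ψ s t') =
        (fun t' => ![cos (u s) * cos (v s), cos (u s) * sin (v s), sin (u s), t']) :=
      funext fun t' => hΨ s t'
    have hfNs : (fun s' => N s' t) =
        (fun s' => ![cos (θ s') * sin (v s') - sin (θ s') * sin (u s') * cos (v s'),
          -(cos (θ s') * cos (v s')) - sin (θ s') * sin (u s') * sin (v s'),
          sin (θ s') * cos (u s'), 0]) :=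
      funext fun s' => hN s' t
    have hfNt : (fun t' => N s t') = (fun _ => N s t) := funext fun t' => by rw [hN, hN]
    have e1 : deriv (fun s' => (![cos (u s') * cos (v s'), cos (u s') * sin (v s'),
        sin (u s'), t] : Fin 4 → ℝ)) s =
        ![-sin (u s) * (cos (u s) * cos (θ s)) * cos (v s) +
            cos (u s) * (-sin (v s) * sin (θ s)),
          -sin (u s) * (cos (u s) * cos (θ s)) * sin (v s) +
            cos (u s) * (cos (v s) * sin (θ s)),
          cos (u s) * (cos (u s) * cos (θ s)), 0] := by
      exact (hasDerivAt_vec4 (hU.cos.mul hV.cos) (hU.cos.mul hV.sin) hU.sin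
        (hasDerivAt_const s t)).deriv
    have e2 : deriv (fun t' => (![cos (u s) * cos (v s), cos (u s) * sin (v s),
        sin (u s), t'] : Fin 4 → ℝ)) t = ![0, 0, 0, 1] := by
      exact (hasDerivAt_vec4 (hasDerivAt_const t _) (hasDerivAt_const t _)
        (hasDerivAt_const t _) (hasDerivAt_id' t)).deriv
    have e3 : deriv (fun s' => (![cos (θ s') * sin (v s') -
        sin (θ s') * sin (u s') * cos (v s'),
        -(cos (θ s') * cos (v s')) - sin (θ s') * sin (u s') * sin (v s'),
        sin (θ s') * cos (u s'), 0] : Fin 4 → ℝ)) s =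
        ![(-sin (θ s) * deriv θ s * sin (v s) + cos (θ s) * (cos (v s) * sin (θ s))) -
            ((cos (θ s) * deriv θ s * sin (u s) +
              sin (θ s) * (cos (u s) * (cos (u s) * cos (θ s)))) * cos (v s) +
              sin (θ s) * sin (u s) * (-sin (v s) * sin (θ s))),
          -(-sin (θ s) * deriv θ s * cos (v s) + cos (θ s) * (-sin (v s) * sin (θ s))) -
            ((cos (θ s) * deriv θ s * sin (u s) +
              sin (θ s) * (cos (u s) * (cos (u s) * cos (θ s)))) * sin (v s) +
              sin (θ s) * sin (u s) * (cos (v s) * sin (θ s))),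
          cos (θ s) * deriv θ s * cos (u s) +
            sin (θ s) * (-sin (u s) * (cos (u s) * cos (θ s))), 0] := by
      exact (hasDerivAt_vec4 ((hΘ.cos.mul hV.sin).sub ((hΘ.sin.mul hU.sin).mul hV.cos))
        (((hΘ.cos.mul hV.cos).neg).sub ((hΘ.sin.mul hU.sin).mul hV.sin))
        (hΘ.sin.mul hU.cos) (hasDerivAt_const s (0 : ℝ))).deriv
    apply meanCurv_eval
    · rw [hfΨs, e1]
      simp only [ip4, Matrix.cons_val_zero, Matrix.cons_val_one, Matrix.head_cons,
        Matrix.cons_val_two, Matrix.tail_cons, Matrix.cons_val_three]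
      linear_combination
        (cos (u s) ^ 2 * cos (v s) ^ 2 * cos (θ s) ^ 2 +
          cos (u s) ^ 2 * sin (v s) ^ 2 * cos (θ s) ^ 2) * sin_sq_add_cos_sq (u s) +
        (cos (u s) ^ 2 * cos (θ s) ^ 2 + cos (u s) ^ 2 * sin (θ s) ^ 2 -
          cos (u s) ^ 4 * cos (θ s) ^ 2) * sin_sq_add_cos_sq (v s) +
        (cos (u s) ^ 2) * sin_sq_add_cos_sq (θ s)
    · rw [hfΨs, hfΨt, e1, e2]
      simp only [ip4, Matrix.cons_val_zero, Matrix.cons_val_one, Matrix.head_cons,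
        Matrix.cons_val_two, Matrix.tail_cons, Matrix.cons_val_three]
      ring
    · rw [hfΨt, e2]
      simp only [ip4, Matrix.cons_val_zero, Matrix.cons_val_one, Matrix.head_cons,
        Matrix.cons_val_two, Matrix.tail_cons, Matrix.cons_val_three]
      ring
    · rw [hfΨs, hfNs, e1, e3]
      simp only [ip4, Matrix.cons_val_zero, Matrix.cons_val_one, Matrix.head_cons,
        Matrix.cons_val_two, Matrix.tail_cons, Matrix.cons_val_three]
      linear_combination
        (cos (u s) * cos (v s) ^ 2 * cos (θ s) ^ 2 * deriv θ s +
          cos (u s) * sin (v s) ^ 2 * cos (θ s) ^ 2 * deriv θ s) * sin_sq_add_cos_sq (u s) +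
        (cos (u s) * cos (θ s) ^ 2 * deriv θ s + cos (u s) * sin (θ s) ^ 2 * deriv θ s -
          cos (u s) ^ 3 * cos (θ s) ^ 2 * deriv θ s -
          sin (u s) * cos (u s) * sin (θ s) * cos (θ s) ^ 2 -
          sin (u s) * cos (u s) * sin (θ s) ^ 3 +
          sin (u s) * cos (u s) ^ 3 * sin (θ s) * cos (θ s) ^ 2) * sin_sq_add_cos_sq (v s) +
        (cos (u s) * deriv θ s - sin (u s) * cos (u s) * sin (θ s)) * sin_sq_add_cos_sq (θ s)
    · rw [hfNs, hfΨt, e3, e2]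
      simp only [ip4, Matrix.cons_val_zero, Matrix.cons_val_one, Matrix.head_cons,
        Matrix.cons_val_two, Matrix.tail_cons, Matrix.cons_val_three]
      ring
    · rw [hfNt, deriv_const]
      simp [ip4]
  refine ⟨part1, ?_, ?_⟩
  · intro h s
    have h0 := h s 0
    rw [key s 0, part1 s 0, div_eq_iff (pow_ne_zero 2 (hreg s))] at h0
    have h2 : cos (u s) * (deriv θ s - sin (θ s) * sin (u s)) =
        cos (u s) * (cos (u s) ^ 2 * cos (θ s)) := by linear_combination -h0
    have h3 := mul_left_cancel₀ (hreg s) h2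
    linarith
  · intro h s t
    rw [key s t, part1 s t, h s, div_eq_iff (pow_ne_zero 2 (hreg s))]
    ring
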